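/- Let B be a k×k real matrix with minimal singular value σ and spectral norm ‖B‖₂ ≤ 1. Then 1 − ‖BᵀB‖_F²/‖B‖_F² ≥ (σ²/k)(k − ‖B‖_F²). -/

import Mathlib

/-! With `M = Bᵀ B` the hypotheses say `σ² • 1 ≤ M ≤ 1` in the Loewner order. The trace of a
product of two positive semidefinite matrices is nonnegative, so `(M - σ² • 1) (1 - M)` has
nonnegative trace, i.e. `σ² (k - tr M) ≤ tr M - tr M²`. Since `tr M ≤ k`, dividing by `k tr M`
gives the bound. -/

open Matrix

/-- Squared Frobenius norm of a real matrix. -/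
noncomputable def frobSq {m n : ℕ} (A : Matrix (Fin m) (Fin n) ℝ) : ℝ :=
  Matrix.trace (Aᵀ * A)

open scoped MatrixOrder ComplexOrder

namespace Matrix

variable {n : Type*} [Fintype n]

theorem le_of_forall_dotProduct_mulVec_le {M N : Matrix n n ℝ} (hM : M.IsSymm) (hN : N.IsSymm)
    (h : ∀ x, x ⬝ᵥ N *ᵥ x ≤ x ⬝ᵥ M *ᵥ x) : N ≤ M := by
  refine le_iff.mpr (.of_dotProduct_mulVec_nonneg ?_ fun x ↦ ?_)
  · exact isHermitian_iff_isSymm.mpr (hM.sub hN)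
  · simpa [sub_mulVec] using h x

theorem dotProduct_transpose_mul_self_mulVec {m R : Type*} [Fintype m] [CommSemiring R]
    (B : Matrix m n R) (x : n → R) : x ⬝ᵥ (Bᵀ * B) *ᵥ x = B *ᵥ x ⬝ᵥ B *ᵥ x := by
  rw [← mulVec_mulVec, dotProduct_mulVec, vecMul_transpose]

variable [DecidableEq n]

theorem PosSemidef.trace_mul_nonneg {𝕜 : Type*} [RCLike 𝕜] {A C : Matrix n n 𝕜}
    (hA : A.PosSemidef) (hC : C.PosSemidef) : 0 ≤ (A * C).trace := by
  -- `tr (A C) = tr (√A C √A)`, the trace of a positive semidefinite matrix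
  set X := CFC.sqrt A
  have hX : Xᴴ = X := (CFC.sqrt_nonneg A).posSemidef.isHermitian.eq
  have hXCX := (hC.mul_mul_conjTranspose_same X).trace_nonneg
  rwa [hX, trace_mul_comm, ← mul_assoc, CFC.sqrt_mul_sqrt_self A hA.nonneg] at hXCX

theorem trace_le_card_of_le_one {M : Matrix n n ℝ} (hM : M ≤ 1) : M.trace ≤ Fintype.card n := by
  simpa [trace_sub] using (le_iff.mp hM).trace_nonneg

theorem mul_card_sub_trace_le_trace_sub_trace_mul_self {M : Matrix n n ℝ} {a : ℝ}
    (ha : a • 1 ≤ M) (hM : M ≤ 1) :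
    a * (Fintype.card n - M.trace) ≤ M.trace - (M * M).trace := by
  have h := (le_iff.mp ha).trace_mul_nonneg (le_iff.mp hM)
  simp only [sub_mul, mul_sub, mul_one, smul_mul, one_mul, trace_sub, trace_smul, trace_one,
    smul_eq_mul] at h
  linarith

end Matrix

theorem frobSq_pos {m n : ℕ} {A : Matrix (Fin m) (Fin n) ℝ} (hA : A ≠ 0) : 0 < frobSq A :=
  (posSemidef_conjTranspose_mul_self A).trace_nonneg.lt_of_ne'
    (mt trace_conjTranspose_mul_self_eq_zero_iff.mp hA)

theorem div_mul_sub_le_one_sub_div {a k S T : ℝ} (ha : 0 ≤ a) (hS : 0 < S) (hSk : S ≤ k)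
    (h : a * (k - S) ≤ S - T) : a / k * (k - S) ≤ 1 - T / S := by
  have hk : 0 < k := hS.trans_le hSk
  rw [one_sub_div hS.ne', div_mul_eq_mul_div, div_le_div_iff₀ hk hS]
  nlinarith [mul_le_mul_of_nonneg_left hSk (mul_nonneg ha (sub_nonneg.mpr hSk))]

theorem min_singular_value_potential_bound_general {k : ℕ}
    (B : Matrix (Fin k) (Fin k) ℝ) (hBne : B ≠ 0) (σ : ℝ)
    -- σ is a lower bound on the singular values of B: σ‖x‖ ≤ ‖Bx‖ for all x
    (hσ : ∀ x : Fin k → ℝ, σ ^ 2 * ∑ j, (x j) ^ 2 ≤ ∑ i, (B.mulVec x i) ^ 2)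
    -- spectral norm ‖B‖₂ ≤ 1: ‖Bx‖ ≤ ‖x‖ for all x
    (hB2 : ∀ x : Fin k → ℝ, ∑ i, (B.mulVec x i) ^ 2 ≤ ∑ j, (x j) ^ 2) :
    (σ ^ 2 / k) * (k - frobSq B) ≤ 1 - frobSq (Bᵀ * B) / frobSq B := by
  set M := Bᵀ * B
  have hMsymm : M.IsSymm := isSymm_transpose_mul_self B
  have hquad (x : Fin k → ℝ) : x ⬝ᵥ M *ᵥ x = ∑ i, (B *ᵥ x) i ^ 2 := by
    rw [dotProduct_transpose_mul_self_mulVec]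
    simp [dotProduct, sq]
  have hnorm (x : Fin k → ℝ) : x ⬝ᵥ x = ∑ j, x j ^ 2 := by simp [dotProduct, sq]
  have hM_le : M ≤ 1 := le_of_forall_dotProduct_mulVec_le isSymm_one hMsymm fun x ↦ by
    simpa [hquad, hnorm] using hB2 x
  have hσ_le : σ ^ 2 • 1 ≤ M := le_of_forall_dotProduct_mulVec_le hMsymm (isSymm_one.smul _)
    fun x ↦ by simpa [hquad, hnorm, smul_mulVec] using hσ x
  have hS : frobSq B = M.trace := rfl
  have hT : frobSq M = (M * M).trace := by rw [frobSq, hMsymm.eq]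
  have hSpos : 0 < M.trace := hS ▸ frobSq_pos hBne
  rw [hT, hS]
  exact div_mul_sub_le_one_sub_div (sq_nonneg σ) hSpos
    (by simpa using trace_le_card_of_le_one hM_le)
    (by simpa using mul_card_sub_trace_le_trace_sub_trace_mul_self hσ_le hM_le)

theorem min_singular_value_potential_bound {k : ℕ} (hk : 0 < k)
    (B : Matrix (Fin k) (Fin k) ℝ) (hBne : B ≠ 0) (σ : ℝ) (hσ0 : 0 ≤ σ)
    -- σ is a lower bound on the singular values of B: σ‖x‖ ≤ ‖Bx‖ for all x
    (hσ : ∀ x : Fin k → ℝ, σ ^ 2 * ∑ j, (x j) ^ 2 ≤ ∑ i, (B.mulVec x i) ^ 2)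
    -- spectral norm ‖B‖₂ ≤ 1: ‖Bx‖ ≤ ‖x‖ for all x
    (hB2 : ∀ x : Fin k → ℝ, ∑ i, (B.mulVec x i) ^ 2 ≤ ∑ j, (x j) ^ 2) :
    (σ ^ 2 / k) * (k - frobSq B) ≤ 1 - frobSq (Bᵀ * B) / frobSq B :=
  min_singular_value_potential_bound_general B hBne σ hσ hB2
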